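/- Let C1 be a t-dimensional linear subspace of F_2^n and let l ≥ 0 be an integer with t + l ≤ n. Let μ be a probability distribution on the set of (t+l)-dimensional linear subspaces C2 of F_2^n containing C1 such that for every x ∈ F_2^n \ C1 the μ-probability of the event {C2 : x ∈ C2} equals (2^{l+t} − 2^t)/(2^n − 2^t). For each subspace C2 in the support of μ let Γ_{C2} ⊆ F_2^n be a set containing, for each coset of C2 in F_2^n, exactly one element of minimal Hamming weight in that coset, and set Γ_{C2} + C1 := {γ + c : γ ∈ Γ_{C2}, c ∈ C1}. Then for every integer k with 0 ≤ k ≤ n/2 and every probability distribution P on F_2^n supported on {x ∈ F_2^n : |x| = k}, E_{C2∼μ}[1 − P(Γ_{C2} + C1)] ≤ 2^{n·h(k/n)}·2^{l+t−n}. -/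

import Mathlib

open scoped Classical

/-- Binary entropy with base-2 logarithm, with the convention `0 * log 0 = 0`. -/
noncomputable def h2 (x : ℝ) : ℝ := -(x * Real.logb 2 x) - (1 - x) * Real.logb 2 (1 - x)

/-!
If a received word `y` of weight `k` is not decoded into `Γ + C1`, its coset leader `γ` has
`|γ| ≤ |y| = k` and `y - γ ∈ C2 \ C1`. So decoding failure forces one of at most `|B(0, k)|`
words `y - w` with `|w| ≤ k`, `y - w ∉ C1`, into the random code, each with probability
`(2^{l+t} - 2^t) / (2^n - 2^t) ≤ 2^{l+t-n}`. A union bound and the volume bound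
`|B(0, k)| ≤ 2^{n h(k/n)}` for `k ≤ n/2` (compare with the binomial expansion of
`(p + (1 - p))^n` at `p = k/n`) finish the proof.
-/

open Finset

lemma ZMod.two_eq_of_ne_zero_iff {a b : ZMod 2} (h : a ≠ 0 ↔ b ≠ 0) : a = b := by
  revert a b; decide

lemma card_hammingNorm_le_le_sum_choose (ι : Type*) [Fintype ι] [DecidableEq ι] (k : ℕ) :
    #{w : ι → ZMod 2 | hammingNorm w ≤ k} ≤ ∑ i ∈ range (k + 1), (Fintype.card ι).choose i := by
  calc #{w : ι → ZMod 2 | hammingNorm w ≤ k}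
      ≤ #((range (k + 1)).biUnion fun i => powersetCard i (univ : Finset ι)) := by
        refine card_le_card_of_injOn (fun w => ({i | w i ≠ 0} : Finset ι)) (fun w hw => ?_)
          fun w _ w' _ h => funext fun i => ZMod.two_eq_of_ne_zero_iff ?_
        · simp only [coe_filter, mem_univ, true_and] at hw
          simpa [Nat.lt_succ_iff, hammingNorm] using hw
        · simpa using congrArg (i ∈ ·) h
    _ ≤ _ := card_biUnion_le.trans_eq (by simp)

lemma sum_range_choose_mul_pow_le_one {p : ℝ} (hp0 : 0 ≤ p) (hp : p ≤ 1 / 2) {k n : ℕ}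
    (hkn : k ≤ n) : (∑ i ∈ range (k + 1), (n.choose i : ℝ)) * (p ^ k * (1 - p) ^ (n - k)) ≤ 1 := by
  have hpq : p ≤ 1 - p := by linarith
  have hq0 : 0 ≤ 1 - p := hp0.trans hpq
  have hterm : ∀ i ∈ range (k + 1), p ^ k * (1 - p) ^ (n - k) ≤ p ^ i * (1 - p) ^ (n - i) := by
    intro i hi
    obtain ⟨j, rfl⟩ := Nat.exists_eq_add_of_le (Nat.lt_succ_iff.1 (mem_range.1 hi))
    calc p ^ (i + j) * (1 - p) ^ (n - (i + j)) = p ^ i * p ^ j * (1 - p) ^ (n - (i + j)) := by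
          rw [pow_add]
      _ ≤ p ^ i * (1 - p) ^ j * (1 - p) ^ (n - (i + j)) := by gcongr
      _ = p ^ i * (1 - p) ^ (n - i) := by
          rw [mul_assoc, ← pow_add, show j + (n - (i + j)) = n - i by omega]
  calc (∑ i ∈ range (k + 1), (n.choose i : ℝ)) * (p ^ k * (1 - p) ^ (n - k))
      ≤ ∑ i ∈ range (k + 1), p ^ i * (1 - p) ^ (n - i) * n.choose i := by
        rw [sum_mul]
        refine sum_le_sum fun i hi => ?_
        rw [mul_comm]
        exact mul_le_mul_of_nonneg_right (hterm i hi) (Nat.cast_nonneg _)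
    _ ≤ ∑ i ∈ range (n + 1), p ^ i * (1 - p) ^ (n - i) * n.choose i :=
        sum_le_sum_of_subset_of_nonneg (range_subset_range.2 (by omega))
          fun _ _ _ => by positivity
    _ = 1 := by rw [← add_pow]; simp

lemma two_rpow_mul_h2_div_mul_eq_one {k n : ℕ} (hkn : k ≤ n) :
    (2 : ℝ) ^ ((n : ℝ) * h2 ((k : ℝ) / n)) * (((k : ℝ) / n) ^ k * (1 - (k : ℝ) / n) ^ (n - k))
      = 1 := by
  set p : ℝ := (k : ℝ) / n
  have hnp : (n : ℝ) * p = k := by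
    rcases Nat.eq_zero_or_pos n with rfl | hn
    · simp [Nat.le_zero.1 hkn]
    · exact mul_div_cancel₀ _ (by positivity)
  have hpk : 0 < p ^ k := by
    rcases Nat.eq_zero_or_pos k with rfl | hk
    · simp
    · exact pow_pos (div_pos (by positivity) (by exact_mod_cast hk.trans_le hkn)) _
  have hqk : 0 < (1 - p) ^ (n - k) := by
    rcases hkn.eq_or_lt with rfl | hlt
    · simp
    · refine pow_pos (sub_pos.2 ?_) _
      rw [div_lt_one (by exact_mod_cast (Nat.zero_le k).trans_lt hlt)]
      exact_mod_cast hlt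
  have hlog : (n : ℝ) * h2 p = -Real.logb 2 (p ^ k * (1 - p) ^ (n - k)) := by
    rw [Real.logb_mul hpk.ne' hqk.ne', Real.logb_pow, Real.logb_pow, Nat.cast_sub hkn, h2, ← hnp]
    ring
  rw [hlog, Real.rpow_neg zero_le_two, Real.rpow_logb zero_lt_two (by norm_num) (mul_pos hpk hqk),
    inv_mul_cancel₀ (mul_pos hpk hqk).ne']

lemma sum_range_choose_le_two_rpow_mul_h2 {k n : ℕ} (hk : 2 * k ≤ n) :
    ∑ i ∈ range (k + 1), (n.choose i : ℝ) ≤ 2 ^ ((n : ℝ) * h2 ((k : ℝ) / n)) := by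
  have hp : (k : ℝ) / n ≤ 1 / 2 := by
    rcases Nat.eq_zero_or_pos n with rfl | hn
    · simp
    · rw [div_le_div_iff₀ (by positivity) two_pos]
      exact_mod_cast (by omega : k * 2 ≤ 1 * n)
  have hkn : k ≤ n := by omega
  calc ∑ i ∈ range (k + 1), (n.choose i : ℝ)
      = (∑ i ∈ range (k + 1), (n.choose i : ℝ)) * (((k : ℝ) / n) ^ k * (1 - (k : ℝ) / n) ^ (n - k))
          * 2 ^ ((n : ℝ) * h2 ((k : ℝ) / n)) := by
        rw [mul_assoc, mul_comm (_ * _), two_rpow_mul_h2_div_mul_eq_one hkn, mul_one]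
    _ ≤ 1 * 2 ^ ((n : ℝ) * h2 ((k : ℝ) / n)) := by
        gcongr
        exact sum_range_choose_mul_pow_le_one (by positivity) hp hkn
    _ = _ := one_mul _

lemma card_hammingNorm_le_le_two_rpow {n k : ℕ} (hk : 2 * k ≤ n) :
    (#{w : Fin n → ZMod 2 | hammingNorm w ≤ k} : ℝ) ≤ 2 ^ ((n : ℝ) * h2 ((k : ℝ) / n)) := by
  refine le_trans ?_ (sum_range_choose_le_two_rpow_mul_h2 hk)
  exact_mod_cast (card_hammingNorm_le_le_sum_choose (Fin n) k).trans_eq (by simp)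

lemma sub_div_sub_le_div {a b c : ℝ} (hb : 0 ≤ b) (hba : b ≤ a) (hac : a ≤ c) :
    (a - b) / (c - b) ≤ a / c := by
  rcases (hba.trans hac).eq_or_lt with rfl | hbc
  · simp only [sub_self, div_zero]
    exact div_nonneg (hb.trans hba) hb
  · rw [div_le_div_iff₀ (sub_pos.2 hbc) (hb.trans_lt hbc)]
    nlinarith

lemma sum_ite_le_card_mul {Ω α : Type*} [Fintype Ω] {μ : Ω → ℝ} (hμ : ∀ ω, 0 ≤ μ ω)
    {E : Ω → Prop} [DecidablePred E] {B : Finset α} {A : α → Ω → Prop}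
    [∀ a, DecidablePred (A a)] {q : ℝ}
    (hcover : ∀ ω, μ ω ≠ 0 → E ω → ∃ a ∈ B, A a ω)
    (hA : ∀ a ∈ B, ∑ ω, (if A a ω then μ ω else 0) ≤ q) :
    ∑ ω, (if E ω then μ ω else 0) ≤ #B * q := by
  have hnonneg : ∀ ω, ∀ a ∈ B, (0 : ℝ) ≤ if A a ω then μ ω else 0 :=
    fun ω _ _ => by split_ifs <;> simp [hμ ω]
  calc ∑ ω, (if E ω then μ ω else 0)
      ≤ ∑ ω, ∑ a ∈ B, (if A a ω then μ ω else 0) := by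
        refine sum_le_sum fun ω _ => ?_
        split_ifs with hE
        · by_cases hμω : μ ω = 0
          · simp [hμω]
          · obtain ⟨a, ha, hAa⟩ := hcover ω hμω hE
            simpa [hAa] using single_le_sum (hnonneg ω) ha
        · exact sum_nonneg (hnonneg ω)
    _ = ∑ a ∈ B, ∑ ω, (if A a ω then μ ω else 0) := sum_comm
    _ ≤ #B * q := by simpa using sum_le_sum hA

lemma sum_mul_one_sub_sum_eq {Ω α : Type*} [Fintype Ω] [Fintype α] [DecidableEq α]
    (μ : Ω → ℝ) {P : α → ℝ} (hP : ∑ y, P y = 1) (S : Ω → Finset α) :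
    ∑ ω, μ ω * (1 - ∑ y ∈ S ω, P y) = ∑ y, P y * ∑ ω, (if y ∉ S ω then μ ω else 0) := by
  have hcompl : ∀ ω, 1 - ∑ y ∈ S ω, P y = ∑ y, if y ∉ S ω then P y else 0 := fun ω => by
    rw [← sum_filter, filter_not, filter_mem_eq_inter, univ_inter, ← hP,
      ← sum_compl_add_sum (S ω), add_sub_cancel_right, compl_eq_univ_sdiff]
  simp_rw [hcompl, mul_sum, mul_ite, mul_zero]
  rw [sum_comm]
  simp_rw [mul_comm]

lemma sum_mul_le_of_forall_ne_zero {α : Type*} [Fintype α] {P f : α → ℝ} {M : ℝ}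
    (hP0 : ∀ y, 0 ≤ P y) (hP1 : ∑ y, P y = 1) (hf : ∀ y, P y ≠ 0 → f y ≤ M) :
    ∑ y, P y * f y ≤ M := by
  calc ∑ y, P y * f y ≤ ∑ y, P y * M := sum_le_sum fun y _ => by
        by_cases hy : P y = 0
        · simp [hy]
        · exact mul_le_mul_of_nonneg_left (hf y hy) (hP0 y)
    _ = M := by rw [← sum_mul, hP1, one_mul]

lemma exists_leader_sub_notMem_of_notMem_add {V : Type*} [AddCommGroup V] {C1 C2 Γ : Set V}
    {wt : V → ℕ} (hleader : ∀ y, ∃ γ ∈ Γ, y - γ ∈ C2)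
    (hmin : ∀ γ ∈ Γ, ∀ y, y - γ ∈ C2 → wt γ ≤ wt y) {y : V}
    (hy : ¬ ∃ γ ∈ Γ, ∃ c ∈ C1, y = γ + c) :
    ∃ γ, (wt γ ≤ wt y ∧ y - γ ∉ C1) ∧ y - γ ∈ C2 := by
  obtain ⟨γ, hγ, hyγ⟩ := hleader y
  exact ⟨γ, ⟨hmin γ hγ y hyγ, fun hc => hy ⟨γ, hγ, y - γ, hc, by abel⟩⟩, hyγ⟩

theorem stmt_1_general (n t l : ℕ) (htl : t + l ≤ n)
    (C1 : Submodule (ZMod 2) (Fin n → ZMod 2))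
    (Ω : Type) [Fintype Ω] (μ : Ω → ℝ)
    (hμ0 : ∀ ω, 0 ≤ μ ω)
    (C2 : Ω → Submodule (ZMod 2) (Fin n → ZMod 2))
    (hprob : ∀ x : Fin n → ZMod 2, x ∉ C1 →
      ∑ ω, (if x ∈ C2 ω then μ ω else 0) = ((2 : ℝ) ^ (l + t) - 2 ^ t) / (2 ^ n - 2 ^ t))
    (Γ : Ω → Finset (Fin n → ZMod 2))
    (hΓuniq : ∀ ω, μ ω ≠ 0 → ∀ y : Fin n → ZMod 2, ∃! γ, γ ∈ Γ ω ∧ y - γ ∈ C2 ω)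
    (hΓmin : ∀ ω, μ ω ≠ 0 → ∀ γ ∈ Γ ω, ∀ y : Fin n → ZMod 2, y - γ ∈ C2 ω →
      hammingNorm γ ≤ hammingNorm y)
    (k : ℕ) (hk : 2 * k ≤ n)
    (P : (Fin n → ZMod 2) → ℝ) (hP0 : ∀ x, 0 ≤ P x) (hP1 : ∑ x, P x = 1)
    (hPsupp : ∀ x, P x ≠ 0 → hammingNorm x = k) :
    ∑ ω, μ ω *
        (1 - ∑ y ∈ Finset.univ.filter
            (fun y : Fin n → ZMod 2 => ∃ γ ∈ Γ ω, ∃ c ∈ C1, y = γ + c), P y)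
      ≤ 2 ^ ((n : ℝ) * h2 ((k : ℝ) / n)) * ((2 : ℝ) ^ (l + t) / 2 ^ n) := by
  rw [sum_mul_one_sub_sum_eq μ hP1]
  refine sum_mul_le_of_forall_ne_zero hP0 hP1 fun y hy => ?_
  have hpr : ((2 : ℝ) ^ (l + t) - 2 ^ t) / (2 ^ n - 2 ^ t) ≤ 2 ^ (l + t) / 2 ^ n :=
    sub_div_sub_le_div (by positivity) (pow_le_pow_right₀ one_le_two (by omega))
      (pow_le_pow_right₀ one_le_two (by omega))
  calc _ ≤ #{w : Fin n → ZMod 2 | hammingNorm w ≤ k ∧ y - w ∉ C1}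
          * (((2 : ℝ) ^ (l + t) - 2 ^ t) / (2 ^ n - 2 ^ t)) := by
        refine sum_ite_le_card_mul hμ0 (fun ω hω hfail => ?_)
          fun w hw => (hprob (y - w) (mem_filter.1 hw).2.2).le
        obtain ⟨γ, hγ, hγC2⟩ := exists_leader_sub_notMem_of_notMem_add (C1 := C1) (C2 := C2 ω)
          (Γ := Γ ω) (fun y => (hΓuniq ω hω y).exists) (hΓmin ω hω) (by simpa using hfail)
        exact ⟨γ, mem_filter.2 ⟨mem_univ _, hPsupp y hy ▸ hγ⟩, hγC2⟩
    _ ≤ 2 ^ ((n : ℝ) * h2 ((k : ℝ) / n)) * (2 ^ (l + t) / 2 ^ n) := by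
        refine mul_le_mul_of_nonneg (le_trans ?_ (card_hammingNorm_le_le_two_rpow hk)) hpr
          (Nat.cast_nonneg _) (by positivity)
        exact_mod_cast card_le_card (monotone_filter_right _ fun _ _ => And.left)

/-- Random-coding bound for minimum-Hamming-distance decoding for a
distribution concentrated on words of Hamming weight `k ≤ n/2`: if the `(t+l)`-dimensional
code `C2 ⊇ C1` is chosen at random so that every `x ∉ C1` lies in `C2` with probability
`(2^{l+t}−2^t)/(2^n−2^t)`, and `Γ_{C2}` is a set of minimal-weight coset representatives
for `C2`, then `E[1 − P(Γ_{C2} + C1)] ≤ 2^{n·h(k/n)}·2^{l+t−n}`. -/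
theorem stmt_1 (n t l : ℕ) (htl : t + l ≤ n)
    (C1 : Submodule (ZMod 2) (Fin n → ZMod 2))
    (hC1rk : Module.finrank (ZMod 2) C1 = t)
    (Ω : Type) [Fintype Ω] (μ : Ω → ℝ)
    (hμ0 : ∀ ω, 0 ≤ μ ω) (hμ1 : ∑ ω, μ ω = 1)
    (C2 : Ω → Submodule (ZMod 2) (Fin n → ZMod 2))
    (hC2le : ∀ ω, μ ω ≠ 0 → C1 ≤ C2 ω)
    (hC2rk : ∀ ω, μ ω ≠ 0 → Module.finrank (ZMod 2) (C2 ω) = t + l)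
    (hprob : ∀ x : Fin n → ZMod 2, x ∉ C1 →
      ∑ ω, (if x ∈ C2 ω then μ ω else 0) = ((2 : ℝ) ^ (l + t) - 2 ^ t) / (2 ^ n - 2 ^ t))
    (Γ : Ω → Finset (Fin n → ZMod 2))
    (hΓuniq : ∀ ω, μ ω ≠ 0 → ∀ y : Fin n → ZMod 2, ∃! γ, γ ∈ Γ ω ∧ y - γ ∈ C2 ω)
    (hΓmin : ∀ ω, μ ω ≠ 0 → ∀ γ ∈ Γ ω, ∀ y : Fin n → ZMod 2, y - γ ∈ C2 ω →
      hammingNorm γ ≤ hammingNorm y)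
    (k : ℕ) (hk : 2 * k ≤ n)
    (P : (Fin n → ZMod 2) → ℝ) (hP0 : ∀ x, 0 ≤ P x) (hP1 : ∑ x, P x = 1)
    (hPsupp : ∀ x, P x ≠ 0 → hammingNorm x = k) :
    ∑ ω, μ ω *
        (1 - ∑ y ∈ Finset.univ.filter
            (fun y : Fin n → ZMod 2 => ∃ γ ∈ Γ ω, ∃ c ∈ C1, y = γ + c), P y)
      ≤ 2 ^ ((n : ℝ) * h2 ((k : ℝ) / n)) * ((2 : ℝ) ^ (l + t) / 2 ^ n) :=
  stmt_1_general n t l htl C1 Ω μ hμ0 C2 hprob Γ hΓuniq hΓmin k hk P hP0 hP1 hPsupp
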